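/- Let F ⊆ F_R be nonempty sets, let f₀ : F_R → ℝ be bounded, let N ≥ 1, ε ∈ (0,1), and define F̄ ⊆ F_R as a set of points y = (x, α) with α ∈ [ε, 1−ε]^N. Suppose the penalty parameter ϱ > 0 satisfies ϱ ≥ (1/(N·ε·(1−ε)))·( sup_{y ∈ F_R} f₀(y) − inf_{y ∈ F} f₀(y) ). Then for every ȳ = (x, α) ∈ F̄, f₀(ȳ) + ϱ·∑_{n=1}^N (α_n² − α_n) ≤ inf_{y ∈ F} f₀(y). -/

import Mathlib

theorem stmt_17 {γ : Type*} (N : ℕ) (hN : 1 ≤ N) (ε : ℝ) (hε : ε ∈ Set.Ioo (0 : ℝ) 1)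
    (F FR Fbar : Set (γ × (Fin N → ℝ)))
    (hFne : F.Nonempty) (hFsub : F ⊆ FR)
    (f₀ : γ × (Fin N → ℝ) → ℝ)
    (hbdd : ∃ M : ℝ, ∀ y ∈ FR, |f₀ y| ≤ M)
    (hFbar : Fbar ⊆ FR)
    (hFbarbox : ∀ y ∈ Fbar, ∀ n : Fin N, y.2 n ∈ Set.Icc ε (1 - ε))
    (ϱ : ℝ) (hϱpos : 0 < ϱ)
    (hϱ : ϱ ≥ (1 / (N * ε * (1 - ε))) * (sSup (f₀ '' FR) - sInf (f₀ '' F))) :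
    ∀ y ∈ Fbar, f₀ y + ϱ * ∑ n, ((y.2 n) ^ 2 - y.2 n) ≤ sInf (f₀ '' F) := by
  obtain ⟨hε0, hε1⟩ := hε
  obtain ⟨M, hM⟩ := hbdd
  have hc : (0:ℝ) < N * ε * (1 - ε) := by
    have : (0:ℝ) < N := by exact_mod_cast hN
    exact mul_pos (mul_pos this hε0) (by linarith)
  intro y hy
  -- bound each summand
  have hsum : ∑ n, ((y.2 n) ^ 2 - y.2 n) ≤ ∑ _n : Fin N, (ε ^ 2 - ε) := by
    apply Finset.sum_le_sum
    intro n _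
    obtain ⟨h1, h2⟩ := hFbarbox y hy n
    nlinarith
  have hsum' : ∑ n, ((y.2 n) ^ 2 - y.2 n) ≤ N * (ε ^ 2 - ε) := by
    simpa [mul_sub] using hsum
  -- f₀ y ≤ sSup
  have hbddA : BddAbove (f₀ '' FR) := ⟨M, by rintro _ ⟨z, hz, rfl⟩; exact (abs_le.mp (hM z hz)).2⟩
  have hS : f₀ y ≤ sSup (f₀ '' FR) :=
    le_csSup hbddA ⟨y, hFbar hy, rfl⟩
  -- from hϱ
  have hϱ' : sSup (f₀ '' FR) - sInf (f₀ '' F) ≤ ϱ * (N * ε * (1 - ε)) := by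
    rw [ge_iff_le, div_mul_eq_mul_div, div_le_iff₀ hc] at hϱ
    linarith
  have hmul : ϱ * ∑ n, ((y.2 n) ^ 2 - y.2 n) ≤ ϱ * (N * (ε ^ 2 - ε)) :=
    mul_le_mul_of_nonneg_left hsum' hϱpos.le
  nlinarith [hmul, hS, hϱ']
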